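/- Let ψ_δ := √δ e^{-δ|·|} ψ^∞. Then, in the sense of distributions, A₁ψ_δ = (m - iδσ₂ sgn(x))ψ_δ, and consequently ⟨ψ_δ, A₁ψ_δ⟩_{L²} = m‖ψ_δ‖₂². -/

import Mathlib

/-!
Both `ψ^∞` and `g` are rational functions of `t = tanh (κ x)`, and `t' = κ (1 - t²)`, so the
threshold equations `ψ₂' = 2 g ψ₁` and `ψ₁' = -(2m - 2g) ψ₂` reduce to polynomial identities in
`t`, using `√ν κ = m - ω` and `ν (m + ω) = m - ω`. Away from the origin the weight
`η = √δ e^{-δ|x|}` satisfies `η' = -δ sgn(x) η`, so the Leibniz rule adds exactly the term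
`-δ sgn(x) ψ_δ` to each equation. In the quadratic form the two `sgn` terms cancel pointwise.
-/

open Real MeasureTheory

namespace Real

theorem hasDerivAt_tanh (x : ℝ) : HasDerivAt tanh (1 - tanh x ^ 2) x := by
  have h := (hasDerivAt_sinh x).fun_div (hasDerivAt_cosh x) (cosh_pos x).ne'
  simp only [← tanh_eq_sinh_div_cosh] at h
  refine h.congr_deriv ?_
  rw [tanh_eq_sinh_div_cosh]
  field_simp

theorem hasDerivAt_tanh_const_mul (κ x : ℝ) :
    HasDerivAt (fun y => tanh (κ * y)) ((1 - tanh (κ * x) ^ 2) * κ) x :=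
  (hasDerivAt_tanh (κ * x)).comp x ((hasDerivAt_id x).const_mul κ |>.congr_deriv (mul_one κ))

theorem hasDerivAt_abs_eq_sign {x : ℝ} (hx : x ≠ 0) : HasDerivAt (|·|) (sign x) x := by
  rcases hx.lt_or_gt with hneg | hpos
  · simpa [sign_of_neg hneg] using hasDerivAt_abs_neg hneg
  · simpa [sign_of_pos hpos] using hasDerivAt_abs_pos hpos

theorem hasDerivAt_exp_neg_mul_abs (δ : ℝ) {x : ℝ} (hx : x ≠ 0) :
    HasDerivAt (fun y => exp (-δ * |y|)) (-(δ * sign x) * exp (-δ * |x|)) x := by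
  convert ((hasDerivAt_abs_eq_sign hx).const_mul (-δ)).exp using 1
  ring

theorem one_sub_mul_tanh_sq_pos {ν : ℝ} (hν : ν ≤ 1) (y : ℝ) : 0 < 1 - ν * tanh y ^ 2 := by
  nlinarith [tanh_sq_lt_one y, sq_nonneg (tanh y)]

end Real

section ThresholdResonance

variable {m ω κ ν : ℝ} {g ψ₁ ψ₂ : ℝ → ℝ}

theorem threshold_parameter_relations (hω₁ : 0 < ω) (hω₂ : ω < m) (hκ : κ = √(m ^ 2 - ω ^ 2))
    (hν : ν = (m - ω) / (m + ω)) :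
    0 ≤ ν ∧ ν < 1 ∧ √ν * κ = m - ω ∧ ν * (m + ω) = m - ω := by
  have hsum : 0 < m + ω := by linarith
  have hdiff : 0 < m - ω := by linarith
  refine ⟨by rw [hν]; positivity, by rw [hν, div_lt_one hsum]; linarith, ?_,
    by rw [hν]; field_simp⟩
  rw [hκ, ← sqrt_mul (by rw [hν]; positivity),
    show ν * (m ^ 2 - ω ^ 2) = (m - ω) ^ 2 by rw [hν]; field_simp; ring, sqrt_sq hdiff.le]

variable (hν₁ : ν < 1) (hνκ : √ν * κ = m - ω)
  (hg : ∀ x, g x = (m - ω) * (1 - tanh (κ * x) ^ 2) / (1 - ν * tanh (κ * x) ^ 2))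
  (hψ₁ : ∀ x, ψ₁ x = √ν * tanh (κ * x) / (1 - ν * tanh (κ * x) ^ 2))
  (hψ₂ : ∀ x, ψ₂ x = -(ν / (1 - ν)) * (1 - tanh (κ * x) ^ 2) / (1 - ν * tanh (κ * x) ^ 2))
include hν₁ hνκ hg hψ₁ hψ₂

theorem hasDerivAt_thresholdResonance_snd (hν₀ : 0 ≤ ν) (x : ℝ) :
    HasDerivAt ψ₂ (2 * g x * ψ₁ x) x := by
  have hT := hasDerivAt_tanh_const_mul κ x
  have hden := one_sub_mul_tanh_sq_pos hν₁.le (κ * x)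
  have H := ((hT.fun_pow 2).const_sub 1 |>.const_mul (-(ν / (1 - ν)))).fun_div
    ((hT.fun_pow 2).const_mul ν |>.const_sub 1) hden.ne'
  rw [show ψ₂ = _ from funext hψ₂]
  refine H.congr_deriv ?_
  rw [hg, hψ₁]
  have : 1 - tanh (κ * x) ^ 2 * ν ≠ 0 := by linarith
  have : 1 - ν ≠ 0 := by linarith
  norm_num only
  field_simp
  linear_combination (tanh (κ * x) * (1 - tanh (κ * x) ^ 2) * (1 - ν)) *
    (√ν * hνκ - κ * sq_sqrt hν₀)

theorem hasDerivAt_thresholdResonance_fst (hνmω : ν * (m + ω) = m - ω) (x : ℝ) :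
    HasDerivAt ψ₁ (-(m + (m - 2 * g x)) * ψ₂ x) x := by
  have hT := hasDerivAt_tanh_const_mul κ x
  have hden := one_sub_mul_tanh_sq_pos hν₁.le (κ * x)
  have H := (hT.const_mul √ν).fun_div ((hT.fun_pow 2).const_mul ν |>.const_sub 1) hden.ne'
  rw [show ψ₁ = _ from funext hψ₁]
  refine H.congr_deriv ?_
  rw [hg, hψ₂]
  have : 1 - tanh (κ * x) ^ 2 * ν ≠ 0 := by linarith
  have : 1 - ν ≠ 0 := by linarith
  norm_num only
  field_simp
  linear_combination ((1 - ν) * (1 - tanh (κ * x) ^ 2) * (1 + ν * tanh (κ * x) ^ 2)) * hνκ -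
    ((1 - tanh (κ * x) ^ 2) * (1 - ν * tanh (κ * x) ^ 2)) * hνmω

end ThresholdResonance

theorem stmt9_general (m ω κ ν δ : ℝ) (hω1 : 0 < ω) (hω2 : ω < m)
    (hκ : κ = Real.sqrt (m ^ 2 - ω ^ 2)) (hν : ν = (m - ω) / (m + ω))
    (g ψ1 ψ2 η ψδ1 ψδ2 : ℝ → ℝ)
    (hg : ∀ x, g x = (m - ω) * (1 - Real.tanh (κ * x) ^ 2) / (1 - ν * Real.tanh (κ * x) ^ 2))
    (hψ1 : ∀ x, ψ1 x = Real.sqrt ν * Real.tanh (κ * x) / (1 - ν * Real.tanh (κ * x) ^ 2))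
    (hψ2 : ∀ x, ψ2 x = -(ν / (1 - ν)) * (1 - Real.tanh (κ * x) ^ 2) / (1 - ν * Real.tanh (κ * x) ^ 2))
    (hη : ∀ x, η x = Real.sqrt δ * Real.exp (-δ * |x|))
    (hψδ1 : ∀ x, ψδ1 x = η x * ψ1 x) (hψδ2 : ∀ x, ψδ2 x = η x * ψ2 x) :
    -- A₁ψ_δ = (m - iδσ₂ sgn)ψ_δ, i.e. componentwise (with M = m - 2g):
    -- ψδ₂' + Mψδ₁ = mψδ₁ - δ sgn(x) ψδ₂ and -ψδ₁' - Mψδ₂ = mψδ₂ + δ sgn(x) ψδ₁,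
    -- which holds pointwise away from x = 0 (hence in the sense of distributions)
    (∀ x, x ≠ 0 →
        HasDerivAt ψδ2 (m * ψδ1 x - δ * Real.sign x * ψδ2 x - (m - 2 * g x) * ψδ1 x) x ∧
        HasDerivAt ψδ1 (-(m + (m - 2 * g x)) * ψδ2 x - δ * Real.sign x * ψδ1 x) x) ∧
    -- consequently ⟨ψ_δ, A₁ψ_δ⟩ = m‖ψ_δ‖₂²
    (∫ x, (ψδ1 x * (m * ψδ1 x - δ * Real.sign x * ψδ2 x) +
        ψδ2 x * (m * ψδ2 x + δ * Real.sign x * ψδ1 x))) =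
      m * ∫ x, (ψδ1 x ^ 2 + ψδ2 x ^ 2) := by
  obtain ⟨hν₀, hν₁, hνκ, hνmω⟩ := threshold_parameter_relations hω1 hω2 hκ hν
  have hη' : ∀ x ≠ 0, HasDerivAt η (-(δ * sign x) * η x) x := fun x hx => by
    rw [hη, show η = _ from funext hη]
    exact ((hasDerivAt_exp_neg_mul_abs δ hx).const_mul √δ).congr_deriv (by ring)
  refine ⟨fun x hx => ⟨?_, ?_⟩, ?_⟩
  · rw [hψδ1, hψδ2, show ψδ2 = _ from funext hψδ2]
    refine (hη' x hx).fun_mul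
      (hasDerivAt_thresholdResonance_snd hν₁ hνκ hg hψ1 hψ2 hν₀ x) |>.congr_deriv ?_
    ring
  · rw [hψδ1, hψδ2, show ψδ1 = _ from funext hψδ1]
    refine (hη' x hx).fun_mul
      (hasDerivAt_thresholdResonance_fst hν₁ hνκ hg hψ1 hψ2 hνmω x) |>.congr_deriv ?_
    ring
  · rw [← integral_const_mul]
    congr 1 with x
    ring

theorem stmt9 (m ω κ ν δ : ℝ) (hm : 0 < m) (hω1 : 0 < ω) (hω2 : ω < m) (hδ : 0 < δ)
    (hκ : κ = Real.sqrt (m ^ 2 - ω ^ 2)) (hν : ν = (m - ω) / (m + ω))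
    (g ψ1 ψ2 η ψδ1 ψδ2 : ℝ → ℝ)
    (hg : ∀ x, g x = (m - ω) * (1 - Real.tanh (κ * x) ^ 2) / (1 - ν * Real.tanh (κ * x) ^ 2))
    (hψ1 : ∀ x, ψ1 x = Real.sqrt ν * Real.tanh (κ * x) / (1 - ν * Real.tanh (κ * x) ^ 2))
    (hψ2 : ∀ x, ψ2 x = -(ν / (1 - ν)) * (1 - Real.tanh (κ * x) ^ 2) / (1 - ν * Real.tanh (κ * x) ^ 2))
    (hη : ∀ x, η x = Real.sqrt δ * Real.exp (-δ * |x|))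
    (hψδ1 : ∀ x, ψδ1 x = η x * ψ1 x) (hψδ2 : ∀ x, ψδ2 x = η x * ψ2 x) :
    -- A₁ψ_δ = (m - iδσ₂ sgn)ψ_δ, i.e. componentwise (with M = m - 2g):
    -- ψδ₂' + Mψδ₁ = mψδ₁ - δ sgn(x) ψδ₂ and -ψδ₁' - Mψδ₂ = mψδ₂ + δ sgn(x) ψδ₁,
    -- which holds pointwise away from x = 0 (hence in the sense of distributions)
    (∀ x, x ≠ 0 →
        HasDerivAt ψδ2 (m * ψδ1 x - δ * Real.sign x * ψδ2 x - (m - 2 * g x) * ψδ1 x) x ∧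
        HasDerivAt ψδ1 (-(m + (m - 2 * g x)) * ψδ2 x - δ * Real.sign x * ψδ1 x) x) ∧
    -- consequently ⟨ψ_δ, A₁ψ_δ⟩ = m‖ψ_δ‖₂²
    (∫ x, (ψδ1 x * (m * ψδ1 x - δ * Real.sign x * ψδ2 x) +
        ψδ2 x * (m * ψδ2 x + δ * Real.sign x * ψδ1 x))) =
      m * ∫ x, (ψδ1 x ^ 2 + ψδ2 x ^ 2) :=
  stmt9_general m ω κ ν δ hω1 hω2 hκ hν g ψ1 ψ2 η ψδ1 ψδ2 hg hψ1 hψ2 hη hψδ1 hψδ2
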